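/- arXiv:2304.00063 — 3 statements merged into one kernel-verified Lean document; each statement's English description precedes it below -/
import Mathlib

section
/- On the rectangle Q = [0,a]×[0,b] with bilinear shape functions, the hourglass mode is Ψ_h(x,y) = (1/2)(2x/a − 1)(2y/b − 1) up to sign, and its energy with respect to a constant diffusion matrix κ equals τ = (b²κ₁₁ + a²κ₂₂)/(3ab). -/
open MeasureTheory

/-- Gradient of a function on ℝ² as a pair. -/
noncomputable def grad (f : ℝ × ℝ → ℝ) (p : ℝ × ℝ) : ℝ × ℝ :=
  (fderiv ℝ f p (1, 0), fderiv ℝ f p (0, 1))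

/-- The bilinear form `w ↦ z ↦ (κ w) · z` for the symmetric matrix
`κ = [[k11,k12],[k12,k22]]`. -/
def kform (k11 k12 k22 : ℝ) (w z : ℝ × ℝ) : ℝ :=
  (k11 * w.1 + k12 * w.2) * z.1 + (k12 * w.1 + k22 * w.2) * z.2

/-! The hourglass mode is separable, `Ψ_h(x, y) = -(1/2) (2x/a - 1) (2y/b - 1) = f(x) g(y)`, with
`f` and `g` affine and of mean zero on their intervals. Its gradient `(f' g, f g')` makes the
energy integrand a sum of three separable terms, and Fubini factors each into one-dimensional
integrals. The mixed `κ₁₂` term vanishes because `f'` is constant and `∫ f = 0`. -/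
lemma grad_mul_comp_fst_snd {f g : ℝ → ℝ} {f' g' : ℝ} {p : ℝ × ℝ}
    (hf : HasDerivAt f f' p.1) (hg : HasDerivAt g g' p.2) :
    grad (fun q => f q.1 * g q.2) p = (f' * g p.2, f p.1 * g') := by
  have hF : HasFDerivAt (fun q : ℝ × ℝ => f q.1 * g q.2)
      (f p.1 • g' • ContinuousLinearMap.snd ℝ ℝ ℝ + g p.2 • f' • ContinuousLinearMap.fst ℝ ℝ ℝ) p :=
    (hf.hasFDerivAt.comp p hasFDerivAt_fst).mul (hg.hasFDerivAt.comp p hasFDerivAt_snd)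
      |>.congr_fderiv (by ext <;> simp)
  simp [grad, hF.fderiv, mul_comm]

lemma setIntegral_Icc_mul_comp_fst_snd (f g : ℝ → ℝ) {p q : ℝ × ℝ} (hpq : p ≤ q) :
    ∫ z in Set.Icc p q, f z.1 * g z.2 = (∫ x in p.1..q.1, f x) * ∫ y in p.2..q.2, g y := by
  rw [Set.Icc_prod_eq, Measure.volume_eq_prod, setIntegral_prod_mul,
    integral_Icc_eq_integral_Ioc, integral_Icc_eq_integral_Ioc,
    intervalIntegral.integral_of_le hpq.1, intervalIntegral.integral_of_le hpq.2]

lemma setIntegral_Icc_kform_grad_mul {f g f' g' : ℝ → ℝ}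
    (hf : ∀ x, HasDerivAt f (f' x) x) (hg : ∀ y, HasDerivAt g (g' y) y)
    (hf' : Continuous f') (hg' : Continuous g') (k11 k12 k22 : ℝ) {p q : ℝ × ℝ} (hpq : p ≤ q) :
    ∫ z in Set.Icc p q, kform k11 k12 k22 (grad (fun z => f z.1 * g z.2) z)
        (grad (fun z => f z.1 * g z.2) z) =
      k11 * ((∫ x in p.1..q.1, f' x ^ 2) * ∫ y in p.2..q.2, g y ^ 2)
      + 2 * k12 * ((∫ x in p.1..q.1, f' x * f x) * ∫ y in p.2..q.2, g y * g' y)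
      + k22 * ((∫ x in p.1..q.1, f x ^ 2) * ∫ y in p.2..q.2, g' y ^ 2) := by
  have hfc : Continuous f := continuous_iff_continuousAt.2 fun x => (hf x).continuousAt
  have hgc : Continuous g := continuous_iff_continuousAt.2 fun y => (hg y).continuousAt
  have hsplit : ∀ z : ℝ × ℝ, kform k11 k12 k22 (grad (fun z => f z.1 * g z.2) z)
      (grad (fun z => f z.1 * g z.2) z) =
        k11 * (f' z.1 ^ 2 * g z.2 ^ 2) + 2 * k12 * (f' z.1 * f z.1 * (g z.2 * g' z.2))
        + k22 * (f z.1 ^ 2 * g' z.2 ^ 2) := fun z => by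
    rw [grad_mul_comp_fst_snd (hf z.1) (hg z.2), kform]
    ring
  simp_rw [hsplit]
  rw [integral_add, integral_add, integral_const_mul, integral_const_mul, integral_const_mul,
    setIntegral_Icc_mul_comp_fst_snd (fun x => f' x ^ 2) (fun y => g y ^ 2) hpq,
    setIntegral_Icc_mul_comp_fst_snd (fun x => f' x * f x) (fun y => g y * g' y) hpq,
    setIntegral_Icc_mul_comp_fst_snd (fun x => f x ^ 2) (fun y => g' y ^ 2) hpq]
  all_goals exact Continuous.integrableOn_Icc (by fun_prop)

lemma integral_two_mul_div_sub_one_pow (L : ℝ) (n : ℕ) :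
    ∫ x in (0:ℝ)..L, (2 * x / L - 1) ^ n = L * (1 + (-1) ^ n) / (2 * (n + 1)) := by
  rcases eq_or_ne L 0 with rfl | hL
  · simp
  have h := intervalIntegral.integral_comp_mul_sub (fun x : ℝ => x ^ n) (a := 0) (b := L)
    (div_ne_zero two_ne_zero hL) 1
  simp only [div_mul_eq_mul_div, mul_zero, zero_sub, div_mul_cancel₀ _ hL, smul_eq_mul,
    integral_pow] at h
  rw [h]
  field_simp
  ring

lemma integral_two_mul_div_sub_one (L : ℝ) : ∫ x in (0:ℝ)..L, (2 * x / L - 1) = 0 := by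
  simpa using integral_two_mul_div_sub_one_pow L 1

/-- on the rectangle `Q = [0,a]×[0,b]` with bilinear (Q1) shape
functions, the hourglass mode is `Ψ_h(x,y) = (1/2)(2x/a − 1)(2y/b − 1)` up to
sign, and its energy for a constant symmetric diffusion matrix `κ` equals
`τ = (b²κ₁₁ + a²κ₂₂)/(3ab)`. -/
theorem hourglass_energy_rectangle
    (a b : ℝ) (ha : 0 < a) (hb : 0 < b)
    (k11 k12 k22 : ℝ)
    (φ : Fin 4 → ℝ × ℝ → ℝ)
    (hφ0 : ∀ p : ℝ × ℝ, φ 0 p = (1 - p.1 / a) * (1 - p.2 / b))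
    (hφ1 : ∀ p : ℝ × ℝ, φ 1 p = (p.1 / a) * (1 - p.2 / b))
    (hφ2 : ∀ p : ℝ × ℝ, φ 2 p = (p.1 / a) * (p.2 / b))
    (hφ3 : ∀ p : ℝ × ℝ, φ 3 p = (1 - p.1 / a) * (p.2 / b))
    (Ψh : ℝ × ℝ → ℝ)
    (hΨ : ∀ p, Ψh p = (1 / 2) * (-φ 0 p + φ 1 p - φ 2 p + φ 3 p))
    (τ : ℝ)
    (hτ : τ = ∫ p in Set.Icc ((0:ℝ), (0:ℝ)) (a, b),
      kform k11 k12 k22 (grad Ψh p) (grad Ψh p)) :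
    (∃ ε : ℝ, (ε = 1 ∨ ε = -1) ∧
      ∀ p : ℝ × ℝ, Ψh p = ε * ((1 / 2) * (2 * p.1 / a - 1) * (2 * p.2 / b - 1))) ∧
    τ = (b ^ 2 * k11 + a ^ 2 * k22) / (3 * a * b) := by
  have hΨ_sep : Ψh = fun p => -(1 / 2) * (2 * p.1 / a - 1) * (2 * p.2 / b - 1) := by
    funext p
    rw [hΨ, hφ0, hφ1, hφ2, hφ3]
    field_simp
    ring
  refine ⟨⟨-1, Or.inr rfl, fun p => by rw [hΨ_sep]; ring⟩, ?_⟩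
  have hf : ∀ x, HasDerivAt (fun x => -(1 / 2) * (2 * x / a - 1)) (-(1 / a)) x := fun x => by
    have := (((hasDerivAt_id x).const_mul 2).div_const a |>.sub_const 1).const_mul (-(1 / 2))
    simp only [id] at this
    exact this.congr_deriv (by field_simp)
  have hg : ∀ y, HasDerivAt (fun y => 2 * y / b - 1) (2 / b) y := fun y => by
    simpa using ((hasDerivAt_id y).const_mul 2).div_const b |>.sub_const 1
  rw [hτ, hΨ_sep, setIntegral_Icc_kform_grad_mul hf hg continuous_const continuous_const _ _ _
    (by simp [Prod.le_def, ha.le, hb.le])]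
  simp only [intervalIntegral.integral_const, intervalIntegral.integral_mul_const,
    intervalIntegral.integral_const_mul, mul_pow, integral_two_mul_div_sub_one_pow,
    integral_two_mul_div_sub_one, smul_eq_mul]
  field_simp [ha.ne', hb.ne']
  norm_num
  ring
end

section
/- On a parallelogram with sides of lengths a and b and angle θ ∈ (0, π), the energy of the bilinear hourglass mode with isotropic diffusion κI is τ = κ(a² + b²)/(3ab sinθ). -/
/-!
Pulled back by `F`, the hourglass mode is `-½(1 - 2ξ)(1 - 2η)`, with reference gradient
`(1 - 2η, 1 - 2ξ)`; its physical gradient is that vector transformed by `F⁻ᵀ`. Changing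
variables contributes `|det F| = ab sin θ`, and on `[0,1]²` the moments
`∫(1 - 2ξ)² = ∫(1 - 2η)² = 1/3`, `∫(1 - 2ξ)(1 - 2η) = 0` reduce the energy to
`ab sin θ · (1/(a sin θ)² + 1/(b sin θ)²) / 3`.
-/

open MeasureTheory Real

theorem grad_comp_continuousLinearEquiv_symm (L : (ℝ × ℝ) ≃L[ℝ] ℝ × ℝ) (g : ℝ × ℝ → ℝ)
    (w : ℝ × ℝ) :
    grad (g ∘ L.symm) (L w) = (fderiv ℝ g w (L.symm (1, 0)), fderiv ℝ g w (L.symm (0, 1))) := by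
  simp [grad, L.symm.comp_right_fderiv]

theorem setIntegral_image_continuousLinearEquiv {E F : Type*} [NormedAddCommGroup E]
    [NormedSpace ℝ E] [FiniteDimensional ℝ E] [MeasurableSpace E] [BorelSpace E]
    [NormedAddCommGroup F] [NormedSpace ℝ F] (μ : Measure E) [μ.IsAddHaarMeasure]
    (L : E ≃L[ℝ] E) {s : Set E} (hs : MeasurableSet s) (f : E → F) :
    ∫ x in L '' s, f x ∂μ = |(L : E →L[ℝ] E).det| • ∫ x in s, f (L x) ∂μ := by
  rw [integral_image_eq_integral_abs_det_fderiv_smul μ hs (f := L)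
    (fun x _ => L.hasFDerivAt.hasFDerivWithinAt) L.injective.injOn, integral_smul]

theorem setIntegral_Icc_prod_mul (f g : ℝ → ℝ) (a b c d : ℝ) :
    ∫ w in Set.Icc (a, c) (b, d), f w.1 * g w.2 =
      (∫ x in Set.Icc a b, f x) * ∫ y in Set.Icc c d, g y := by
  rw [← Set.Icc_prod_Icc, Measure.volume_eq_prod, setIntegral_prod_mul]

theorem integral_Icc_one_sub_two_mul : ∫ x in Set.Icc (0:ℝ) 1, (1 - 2 * x) = 0 := by
  rw [integral_Icc_eq_integral_Ioc, ← intervalIntegral.integral_of_le zero_le_one,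
    intervalIntegral.integral_comp_sub_mul (fun x => x) two_ne_zero]
  norm_num

theorem integral_Icc_one_sub_two_mul_sq : ∫ x in Set.Icc (0:ℝ) 1, (1 - 2 * x) ^ 2 = 1 / 3 := by
  rw [integral_Icc_eq_integral_Ioc, ← intervalIntegral.integral_of_le zero_le_one,
    intervalIntegral.integral_comp_sub_mul (fun x => x ^ 2) two_ne_zero]
  norm_num [integral_pow]

-- `½(-φ̂₀ + φ̂₁ - φ̂₂ + φ̂₃)` for the Q1 shape functions `φ̂ᵢ` on `[0,1]²`
noncomputable def q1Hourglass (w : ℝ × ℝ) : ℝ := -(1 / 2) * ((1 - 2 * w.1) * (1 - 2 * w.2))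

theorem fderiv_q1Hourglass_apply (w v : ℝ × ℝ) :
    fderiv ℝ q1Hourglass w v = (1 - 2 * w.2) * v.1 + (1 - 2 * w.1) * v.2 := by
  have h1 := ((hasFDerivAt_fst (𝕜 := ℝ) (p := w)).const_mul (2:ℝ)).const_sub (1:ℝ)
  have h2 := ((hasFDerivAt_snd (𝕜 := ℝ) (p := w)).const_mul (2:ℝ)).const_sub (1:ℝ)
  have h : HasFDerivAt q1Hourglass _ w := (h1.mul h2).const_mul (-(1 / 2) : ℝ)
  rw [h.fderiv]
  simp
  ring

theorem setIntegral_unitSquare_quadratic (A B C : ℝ) :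
    ∫ w in Set.Icc ((0:ℝ), (0:ℝ)) (1, 1),
      (A * (1 - 2 * w.2) ^ 2 + B * ((1 - 2 * w.1) * (1 - 2 * w.2)) + C * (1 - 2 * w.1) ^ 2) =
      (A + C) / 3 := by
  have hint : ∀ f : ℝ × ℝ → ℝ, Continuous f → IntegrableOn f (Set.Icc (0, 0) (1, 1)) :=
    fun f hf => hf.integrableOn_Icc
  have hηη : ∫ w in Set.Icc ((0:ℝ), (0:ℝ)) (1, 1), (1 - 2 * w.2) ^ 2 = 1 / 3 := by
    rw [← integral_Icc_one_sub_two_mul_sq]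
    simpa using setIntegral_Icc_prod_mul (fun _ => 1) (fun y => (1 - 2 * y) ^ 2) 0 1 0 1
  have hξη : ∫ w in Set.Icc ((0:ℝ), (0:ℝ)) (1, 1), (1 - 2 * w.1) * (1 - 2 * w.2) = 0 := by
    simpa [integral_Icc_one_sub_two_mul] using
      setIntegral_Icc_prod_mul (fun x => 1 - 2 * x) (fun y => 1 - 2 * y) 0 1 0 1
  have hξξ : ∫ w in Set.Icc ((0:ℝ), (0:ℝ)) (1, 1), (1 - 2 * w.1) ^ 2 = 1 / 3 := by
    rw [← integral_Icc_one_sub_two_mul_sq]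
    simpa using setIntegral_Icc_prod_mul (fun x => (1 - 2 * x) ^ 2) (fun _ => 1) 0 1 0 1
  rw [integral_add (hint _ (by fun_prop)) (hint _ (by fun_prop)), integral_add
    (hint _ (by fun_prop)) (hint _ (by fun_prop)), integral_const_mul, integral_const_mul,
    integral_const_mul, hηη, hξη, hξξ]
  ring

noncomputable def parallelogramMap (a b θ : ℝ) : ℝ × ℝ →L[ℝ] ℝ × ℝ :=
  (a • ContinuousLinearMap.fst ℝ ℝ ℝ + (b * cos θ) • ContinuousLinearMap.snd ℝ ℝ ℝ).prod
    ((b * sin θ) • ContinuousLinearMap.snd ℝ ℝ ℝ)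

theorem parallelogramMap_apply (a b θ : ℝ) (w : ℝ × ℝ) :
    parallelogramMap a b θ w = (a * w.1 + b * cos θ * w.2, b * sin θ * w.2) := by
  simp [parallelogramMap]

theorem det_parallelogramMap (a b θ : ℝ) : (parallelogramMap a b θ).det = a * b * sin θ := by
  rw [ContinuousLinearMap.det, ← LinearMap.det_toMatrix (Module.Basis.finTwoProd ℝ),
    Matrix.det_fin_two]
  simp [LinearMap.toMatrix_apply, parallelogramMap]
  ring

section

variable {a b θ : ℝ} (ha : a ≠ 0) (hb : b ≠ 0) (hθ : sin θ ≠ 0)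

noncomputable def parallelogramEquiv : (ℝ × ℝ) ≃L[ℝ] ℝ × ℝ :=
  (parallelogramMap a b θ).toContinuousLinearEquivOfDetNeZero <| by
    rw [det_parallelogramMap]; exact mul_ne_zero (mul_ne_zero ha hb) hθ

theorem coe_parallelogramEquiv :
    (parallelogramEquiv ha hb hθ : ℝ × ℝ →L[ℝ] ℝ × ℝ) = parallelogramMap a b θ :=
  ContinuousLinearMap.coe_toContinuousLinearEquivOfDetNeZero _ _

theorem parallelogramEquiv_symm_apply (p : ℝ × ℝ) :
    (parallelogramEquiv ha hb hθ).symm p =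
      ((p.1 - cos θ / sin θ * p.2) / a, p.2 / (b * sin θ)) := by
  rw [ContinuousLinearEquiv.symm_apply_eq, parallelogramEquiv,
    ContinuousLinearMap.toContinuousLinearEquivOfDetNeZero_apply, parallelogramMap_apply]
  ext <;> field_simp
  ring

theorem grad_q1Hourglass_comp_parallelogramEquiv_symm (w : ℝ × ℝ) :
    grad (q1Hourglass ∘ (parallelogramEquiv ha hb hθ).symm) (parallelogramEquiv ha hb hθ w) =
      ((1 - 2 * w.2) / a, ((1 - 2 * w.1) / b - cos θ * (1 - 2 * w.2) / a) / sin θ) := by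
  rw [grad_comp_continuousLinearEquiv_symm, parallelogramEquiv_symm_apply,
    parallelogramEquiv_symm_apply, fderiv_q1Hourglass_apply, fderiv_q1Hourglass_apply]
  ext <;> field_simp <;> ring

end

theorem setIntegral_normSq_grad_q1Hourglass_parallelogram {a b θ : ℝ} (ha : 0 < a) (hb : 0 < b)
    (hθ : 0 < sin θ) :
    ∫ p in parallelogramEquiv ha.ne' hb.ne' hθ.ne' '' Set.Icc ((0:ℝ), (0:ℝ)) (1, 1),
      ((grad (q1Hourglass ∘ (parallelogramEquiv ha.ne' hb.ne' hθ.ne').symm) p).1 ^ 2 +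
        (grad (q1Hourglass ∘ (parallelogramEquiv ha.ne' hb.ne' hθ.ne').symm) p).2 ^ 2) =
      (a ^ 2 + b ^ 2) / (3 * a * b * sin θ) := by
  have hnormSq : ∀ w : ℝ × ℝ,
      ((1 - 2 * w.2) / a) ^ 2 + (((1 - 2 * w.1) / b - cos θ * (1 - 2 * w.2) / a) / sin θ) ^ 2 =
        1 / (a * sin θ) ^ 2 * (1 - 2 * w.2) ^ 2 +
          -(2 * cos θ / (a * b * sin θ ^ 2)) * ((1 - 2 * w.1) * (1 - 2 * w.2)) +
          1 / (b * sin θ) ^ 2 * (1 - 2 * w.1) ^ 2 := by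
    intro w
    field_simp
    linear_combination (b ^ 2 * (1 - 2 * w.2) ^ 2) * sin_sq_add_cos_sq θ
  rw [setIntegral_image_continuousLinearEquiv volume _ measurableSet_Icc, coe_parallelogramEquiv,
    det_parallelogramMap, abs_of_pos (by positivity)]
  simp_rw [grad_q1Hourglass_comp_parallelogramEquiv_symm, hnormSq,
    setIntegral_unitSquare_quadratic, smul_eq_mul]
  field_simp
  ring

theorem hourglass_energy_parallelogram_isotropic_general
    (a b θ κ : ℝ) (ha : 0 < a) (hb : 0 < b) (hθ : θ ∈ Set.Ioo 0 π)
    (F : ℝ × ℝ → ℝ × ℝ)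
    (hF : ∀ w : ℝ × ℝ, F w = (a * w.1 + b * Real.cos θ * w.2, b * Real.sin θ * w.2))
    (φ : Fin 4 → ℝ × ℝ → ℝ)
    -- the Q1 reference shape functions on [0,1]², transported by F
    (hφ0 : ∀ w : ℝ × ℝ, φ 0 (F w) = (1 - w.1) * (1 - w.2))
    (hφ1 : ∀ w : ℝ × ℝ, φ 1 (F w) = w.1 * (1 - w.2))
    (hφ2 : ∀ w : ℝ × ℝ, φ 2 (F w) = w.1 * w.2)
    (hφ3 : ∀ w : ℝ × ℝ, φ 3 (F w) = (1 - w.1) * w.2)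
    (Ψh : ℝ × ℝ → ℝ)
    (hΨ : ∀ p, Ψh p = (1 / 2) * (-φ 0 p + φ 1 p - φ 2 p + φ 3 p))
    (τ : ℝ)
    (hτ : τ = κ * ∫ p in F '' Set.Icc ((0:ℝ), (0:ℝ)) (1, 1),
      ((grad Ψh p).1 ^ 2 + (grad Ψh p).2 ^ 2)) :
    τ = κ * (a ^ 2 + b ^ 2) / (3 * a * b * Real.sin θ) := by
  have hsin : 0 < sin θ := sin_pos_of_pos_of_lt_pi hθ.1 hθ.2
  set L := parallelogramEquiv ha.ne' hb.ne' hsin.ne'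
  have hFL : F = L := funext fun w => by
    rw [hF, ← ContinuousLinearEquiv.coe_coe, coe_parallelogramEquiv, parallelogramMap_apply]
  have hΨL : Ψh = q1Hourglass ∘ L.symm := funext fun p => by
    obtain ⟨w, rfl⟩ := L.surjective p
    rw [hΨ, ← congrFun hFL w, hφ0, hφ1, hφ2, hφ3, Function.comp_apply, hFL,
      L.symm_apply_apply, q1Hourglass]
    ring
  rw [hτ, hFL, hΨL, setIntegral_normSq_grad_q1Hourglass_parallelogram ha hb hsin, mul_div_assoc]

/-- on the parallelogram spanned by `u = (a,0)` and
`v = (b cosθ, b sinθ)` with `θ ∈ (0,π)`, the energy of the bilinear hourglass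
mode for isotropic diffusion `κI` is `τ = κ(a² + b²)/(3ab sinθ)`.  The bilinear
shape functions are transported from the Q1 reference functions on `[0,1]²` by
the affine map `F(ξ,η) = ξu + ηv`. -/
theorem hourglass_energy_parallelogram_isotropic
    (a b θ κ : ℝ) (ha : 0 < a) (hb : 0 < b) (hθ : θ ∈ Set.Ioo 0 π)
    (F : ℝ × ℝ → ℝ × ℝ)
    (hF : ∀ w : ℝ × ℝ, F w = (a * w.1 + b * Real.cos θ * w.2, b * Real.sin θ * w.2))
    (φ : Fin 4 → ℝ × ℝ → ℝ)
    -- the Q1 reference shape functions on [0,1]², transported by F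
    (hφ0 : ∀ w : ℝ × ℝ, φ 0 (F w) = (1 - w.1) * (1 - w.2))
    (hφ1 : ∀ w : ℝ × ℝ, φ 1 (F w) = w.1 * (1 - w.2))
    (hφ2 : ∀ w : ℝ × ℝ, φ 2 (F w) = w.1 * w.2)
    (hφ3 : ∀ w : ℝ × ℝ, φ 3 (F w) = (1 - w.1) * w.2)
    (hφdiff : ∀ i : Fin 4, Differentiable ℝ (φ i))
    (Ψh : ℝ × ℝ → ℝ)
    (hΨ : ∀ p, Ψh p = (1 / 2) * (-φ 0 p + φ 1 p - φ 2 p + φ 3 p))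
    (τ : ℝ)
    (hτ : τ = κ * ∫ p in F '' Set.Icc ((0:ℝ), (0:ℝ)) (1, 1),
      ((grad Ψh p).1 ^ 2 + (grad Ψh p).2 ^ 2)) :
    τ = κ * (a ^ 2 + b ^ 2) / (3 * a * b * Real.sin θ) :=
  hourglass_energy_parallelogram_isotropic_general a b θ κ ha hb hθ F hF φ hφ0 hφ1 hφ2 hφ3 Ψh hΨ τ
    hτ
end

section
/- The functions 1, x, y, Ψ_h form a basis of the 4-dimensional local space spanned by generalized barycentric coordinates φ1,...,φ4 on a nondegenerate quadrilateral; equivalently, the 4×4 change-of-basis matrix with rows (1,1,1,1), (x1,...,x4), (y1,...,y4), (−1/2,1/2,−1/2,1/2) is invertible whenever the quadrilateral has nonzero area. -/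
set_option maxHeartbeats 1000000 in
lemma my_det_fin_four (M : Matrix (Fin 4) (Fin 4) ℝ) :
    M.det = M 0 0 * (M 1 1 * (M 2 2 * M 3 3 - M 2 3 * M 3 2)
                     - M 1 2 * (M 2 1 * M 3 3 - M 2 3 * M 3 1)
                     + M 1 3 * (M 2 1 * M 3 2 - M 2 2 * M 3 1))
            - M 0 1 * (M 1 0 * (M 2 2 * M 3 3 - M 2 3 * M 3 2)
                     - M 1 2 * (M 2 0 * M 3 3 - M 2 3 * M 3 0)
                     + M 1 3 * (M 2 0 * M 3 2 - M 2 2 * M 3 0))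
            + M 0 2 * (M 1 0 * (M 2 1 * M 3 3 - M 2 3 * M 3 1)
                     - M 1 1 * (M 2 0 * M 3 3 - M 2 3 * M 3 0)
                     + M 1 3 * (M 2 0 * M 3 1 - M 2 1 * M 3 0))
            - M 0 3 * (M 1 0 * (M 2 1 * M 3 2 - M 2 2 * M 3 1)
                     - M 1 1 * (M 2 0 * M 3 2 - M 2 2 * M 3 0)
                     + M 1 2 * (M 2 0 * M 3 1 - M 2 1 * M 3 0)) := by
  rw [Matrix.det_succ_row_zero, Fin.sum_univ_four]
  simp [Matrix.det_fin_three, Matrix.submatrix_apply, Fin.succAbove, Fin.lt_def,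
    Fin.sum_univ_succ, show (Fin.succ 2 : Fin 4) = 3 from rfl,
    show ((3:Fin 4):ℕ) = 3 from rfl, show (Fin.castSucc 2 : Fin 4) = 2 from rfl]
  norm_num
  ring

/-- the 4×4 change-of-basis matrix between the generalized
barycentric coordinates `φ1,…,φ4` and the functions `1, x, y, Ψ_h` — the matrix
with rows `(1,1,1,1)`, `(x1,…,x4)`, `(y1,…,y4)`, `(−1/2,1/2,−1/2,1/2)` — is
invertible whenever the quadrilateral has nonzero (shoelace) area; equivalently,
`1, x, y, Ψ_h` form a basis of the local space. -/
theorem transfer_matrix_invertible_of_area_ne_zero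
    (x y : Fin 4 → ℝ)
    (areaQ : ℝ)
    (hArea : areaQ = (1 / 2) * ∑ i : Fin 4, (x i * y (i + 1) - x (i + 1) * y i))
    (hne : areaQ ≠ 0) :
    IsUnit (Matrix.det
      !![1, 1, 1, 1;
         x 0, x 1, x 2, x 3;
         y 0, y 1, y 2, y 3;
         -(1/2), 1/2, -(1/2), 1/2]) := by
  rw [Fin.sum_univ_four] at hArea
  simp only [show (0:Fin 4)+1 = 1 from rfl, show (1:Fin 4)+1 = 2 from rfl,
    show (2:Fin 4)+1 = 3 from rfl, show (3:Fin 4)+1 = 0 from rfl] at hArea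
  rw [isUnit_iff_ne_zero, my_det_fin_four]
  intro h
  apply hne
  rw [hArea]
  simp only [Matrix.cons_val', Matrix.cons_val_zero, Matrix.cons_val_one, Matrix.head_cons,
    Matrix.empty_val', Matrix.cons_val_fin_one, Matrix.head_fin_const, Matrix.cons_val_succ,
    Matrix.cons_val_two, Matrix.cons_val_three, Matrix.vecHead, Matrix.vecTail,
    Matrix.of_apply, Function.comp] at h
  nlinarith [h]
end
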